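/- Let σ̄ ≥ σ̲ > 0, define G(x) := (1/2)(σ̄² x⁺ − σ̲² x⁻) for x ∈ ℝ, let c ≥ 0, and let η : [0,T] → ℝ be measurable with |η(s)| = c for all s. For a measurable θ : [0,T] → [σ̲², σ̄²] put K^θ_t := ∫₀ᵗ (η(s)θ(s) − 2G(η(s))) ds. Then: (i) −c(σ̄² − σ̲²)(t−s) ≤ K^θ_t − K^θ_s ≤ 0 for all 0 ≤ s ≤ t ≤ T; (ii) for every step function a on [0,T], ∫₀ᵀ a(s) dK^θ_s ≤ ∫₀ᵀ C(a(s)) ds, where C(x) := c(σ̄² − σ̲²) x⁻; and (iii) for every step function a there exists a measurable θ^a : [0,T] → [σ̲², σ̄²] such that ∫₀ᵀ a(s) dK^{θ^a}_s = ∫₀ᵀ C(a(s)) ds. -/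

import Mathlib

open MeasureTheory

noncomputable section

/-- A deterministic step function on `[0,T]`:
`a(t) = Σ_{k<n} a_k 1_{(t_k,t_{k+1}]}(t)` for a partition `0 = t_0 < ⋯ < t_n = T`. -/
def IsStepFun (T : ℝ) (a : ℝ → ℝ) : Prop :=
  ∃ (n : ℕ) (t : Fin (n + 1) → ℝ) (c : Fin n → ℝ),
    t 0 = 0 ∧ t (Fin.last n) = T ∧ StrictMono t ∧
    ∀ s, a s = ∑ k, c k * Set.indicator (Set.Ioc (t k.castSucc) (t k.succ)) (fun _ => (1:ℝ)) s


lemma intInt_of_bdd {f : ℝ → ℝ} (hf : Measurable f) {M : ℝ} (hb : ∀ x, |f x| ≤ M)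
    (a b : ℝ) : IntervalIntegrable f volume a b := by
  rw [intervalIntegrable_iff]
  refine Integrable.mono' (g := fun _ => M) ?_ hf.aestronglyMeasurable
    (Filter.Eventually.of_forall hb)
  exact (integrableOn_const_iff).mpr (Or.inr measure_Ioc_lt_top)

lemma stepFun_meas_bdd {T : ℝ} {a : ℝ → ℝ} (h : IsStepFun T a) :
    Measurable a ∧ ∃ A, 0 ≤ A ∧ ∀ s, |a s| ≤ A := by
  obtain ⟨n, t, co, ht0, htT, hmono, hform⟩ := h
  constructor
  · have ha : a = fun s => ∑ k, co k *
        Set.indicator (Set.Ioc (t k.castSucc) (t k.succ)) (fun _ => (1:ℝ)) s :=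
      funext hform
    rw [ha]
    exact Finset.measurable_sum _ fun k _ =>
      measurable_const.mul (measurable_const.indicator measurableSet_Ioc)
  · refine ⟨∑ k, |co k|, Finset.sum_nonneg fun k _ => abs_nonneg _, fun s => ?_⟩
    rw [hform s]
    refine (Finset.abs_sum_le_sum_abs _ _).trans (Finset.sum_le_sum fun k _ => ?_)
    rw [abs_mul]
    have hind : |Set.indicator (Set.Ioc (t k.castSucc) (t k.succ)) (fun _ => (1:ℝ)) s| ≤ 1 := by
      by_cases hmem : s ∈ Set.Ioc (t k.castSucc) (t k.succ)
      · simp [Set.indicator_of_mem hmem]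
      · simp [Set.indicator_of_notMem hmem]
    calc |co k| * _ ≤ |co k| * 1 := mul_le_mul_of_nonneg_left hind (abs_nonneg _)
      _ = |co k| := mul_one _

/-- with `G(x) = (σ̄² x⁺ − σ̲² x⁻)/2`, `|η| ≡ c` and
`K^θ_t = ∫₀ᵗ (η θ − 2G(η)) ds` for measurable `θ : [0,T] → [σ̲², σ̄²]`:
(i) `−c(σ̄²−σ̲²)(t−s) ≤ K^θ_t − K^θ_s ≤ 0`;
(ii) `∫₀ᵀ a dK^θ ≤ ∫₀ᵀ C(a(s)) ds` for every step function `a`, where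
`C(x) = c(σ̄²−σ̲²) x⁻`;
(iii) for every step function `a` there is `θ^a` achieving equality in (ii). -/
theorem stmt11 (T : ℝ) (hT : 0 < T)
    (sbar slow : ℝ) (hs : slow ≤ sbar) (hslow : 0 < slow)
    (c : ℝ) (hc : 0 ≤ c)
    (η : ℝ → ℝ) (hηm : Measurable η) (hηc : ∀ s, |η s| = c)
    (G : ℝ → ℝ) (hG : ∀ x, G x = (1 / 2) * (sbar ^ 2 * max x 0 - slow ^ 2 * max (-x) 0))
    (C : ℝ → ℝ) (hC : ∀ x, C x = c * (sbar ^ 2 - slow ^ 2) * max (-x) 0)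
    (K : (ℝ → ℝ) → ℝ → ℝ)
    (hK : ∀ (θ : ℝ → ℝ) (t : ℝ), K θ t = ∫ s in (0:ℝ)..t, (η s * θ s - 2 * G (η s))) :
    (∀ θ : ℝ → ℝ, Measurable θ → (∀ s, θ s ∈ Set.Icc (slow ^ 2) (sbar ^ 2)) →
      ∀ s t : ℝ, 0 ≤ s → s ≤ t → t ≤ T →
        -(c * (sbar ^ 2 - slow ^ 2) * (t - s)) ≤ K θ t - K θ s ∧ K θ t - K θ s ≤ 0) ∧
    (∀ θ : ℝ → ℝ, Measurable θ → (∀ s, θ s ∈ Set.Icc (slow ^ 2) (sbar ^ 2)) →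
      ∀ a : ℝ → ℝ, IsStepFun T a →
        ∫ s in (0:ℝ)..T, a s * (η s * θ s - 2 * G (η s)) ≤ ∫ s in (0:ℝ)..T, C (a s)) ∧
    (∀ a : ℝ → ℝ, IsStepFun T a →
      ∃ θ : ℝ → ℝ, Measurable θ ∧ (∀ s, θ s ∈ Set.Icc (slow ^ 2) (sbar ^ 2)) ∧
        ∫ s in (0:ℝ)..T, a s * (η s * θ s - 2 * G (η s)) = ∫ s in (0:ℝ)..T, C (a s)) := by
  have hss : slow ^ 2 ≤ sbar ^ 2 := by nlinarith
  set M : ℝ := c * (sbar ^ 2 - slow ^ 2) with hMdef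
  have hM : 0 ≤ M := mul_nonneg hc (by linarith)
  -- pointwise bounds on the integrand
  have hfb : ∀ (θ : ℝ → ℝ), (∀ s, θ s ∈ Set.Icc (slow ^ 2) (sbar ^ 2)) →
      ∀ s, -M ≤ η s * θ s - 2 * G (η s) ∧ η s * θ s - 2 * G (η s) ≤ 0 := by
    intro θ hθ s
    obtain ⟨hθ1, hθ2⟩ := hθ s
    rw [hG]
    rcases (abs_eq hc).mp (hηc s) with h | h <;> rw [h]
    · rw [max_eq_left hc, max_eq_right (neg_nonpos.mpr hc)]
      constructor <;> nlinarith
    · rw [neg_neg, max_eq_left hc, max_eq_right (neg_nonpos.mpr hc)]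
      constructor <;> nlinarith
  -- measurability of the integrand
  have hfm : ∀ (θ : ℝ → ℝ), Measurable θ →
      Measurable (fun s => η s * θ s - 2 * G (η s)) := by
    intro θ hθ
    have he : (fun s => η s * θ s - 2 * G (η s)) =
        fun s => η s * θ s - 2 * ((1 / 2) * (sbar ^ 2 * max (η s) 0 - slow ^ 2 * max (-(η s)) 0)) := by
      funext s; rw [hG]
    rw [he]
    exact (hηm.mul hθ).sub (measurable_const.mul (measurable_const.mul
      ((measurable_const.mul (hηm.max measurable_const)).sub
        (measurable_const.mul (hηm.neg.max measurable_const)))))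
  have hfabs : ∀ (θ : ℝ → ℝ), (∀ s, θ s ∈ Set.Icc (slow ^ 2) (sbar ^ 2)) →
      ∀ s, |η s * θ s - 2 * G (η s)| ≤ M := fun θ hθ s =>
    abs_le.mpr ⟨(hfb θ hθ s).1, (hfb θ hθ s).2.trans hM⟩
  refine ⟨?_, ?_, ?_⟩
  · -- (i)
    intro θ hθm hθr s t hs0 hst htT
    have hint : ∀ u v : ℝ, IntervalIntegrable (fun x => η x * θ x - 2 * G (η x)) volume u v :=
      intInt_of_bdd (hfm θ hθm) (hfabs θ hθr)
    have hdiff : K θ t - K θ s = ∫ x in s..t, (η x * θ x - 2 * G (η x)) := by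
      rw [hK, hK]
      exact intervalIntegral.integral_interval_sub_left (hint 0 t) (hint 0 s)
    constructor
    · rw [hdiff]
      have h1 := intervalIntegral.integral_mono_on (μ := volume) hst
        (intervalIntegrable_const (c := -M)) (hint s t) (fun x _ => (hfb θ hθr x).1)
      rw [intervalIntegral.integral_const, smul_eq_mul] at h1
      linarith
    · rw [hdiff]
      have h2 := intervalIntegral.integral_mono_on (μ := volume) hst
        (hint s t) (intervalIntegrable_const (c := (0:ℝ))) (fun x _ => (hfb θ hθr x).2)
      simpa using h2
  · -- (ii)
    intro θ hθm hθr a hstep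
    obtain ⟨ham, A, hA0, hA⟩ := stepFun_meas_bdd hstep
    have hpt : ∀ x, a x * (η x * θ x - 2 * G (η x)) ≤ C (a x) := by
      intro x
      obtain ⟨h1, h2⟩ := hfb θ hθr x
      rw [hC]
      rcases le_or_gt 0 (a x) with h | h
      · rw [max_eq_right (neg_nonpos.mpr h)]
        nlinarith
      · rw [max_eq_left (by linarith)]
        nlinarith
    have hCb : ∀ x, |C (a x)| ≤ M * A := by
      intro x
      rw [hC, abs_mul, abs_of_nonneg hM, abs_of_nonneg (le_max_right _ _)]
      refine mul_le_mul_of_nonneg_left ?_ hM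
      exact (max_le (neg_le_abs _) (abs_nonneg _)).trans (hA x)
    have hCm : Measurable (fun x => C (a x)) := by
      have he : (fun x => C (a x)) = fun x => c * (sbar ^ 2 - slow ^ 2) * max (-(a x)) 0 := by
        funext x; rw [hC]
      rw [he]
      exact measurable_const.mul (ham.neg.max measurable_const)
    have hafb : ∀ x, |a x * (η x * θ x - 2 * G (η x))| ≤ A * M := by
      intro x
      rw [abs_mul]
      exact mul_le_mul (hA x) (hfabs θ hθr x) (abs_nonneg _) hA0
    exact intervalIntegral.integral_mono_on hT.le
      (intInt_of_bdd (ham.mul (hfm θ hθm)) hafb 0 T)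
      (intInt_of_bdd hCm hCb 0 T) (fun x _ => hpt x)
  · -- (iii)
    intro a hstep
    obtain ⟨ham, A, hA0, hA⟩ := stepFun_meas_bdd hstep
    refine ⟨fun s => if (0 ≤ a s ↔ 0 ≤ η s) then sbar ^ 2 else slow ^ 2, ?_, ?_, ?_⟩
    · have hS : MeasurableSet {s : ℝ | 0 ≤ a s ↔ 0 ≤ η s} := by
        have h1 : MeasurableSet {s : ℝ | 0 ≤ a s} := measurableSet_le measurable_const ham
        have h2 : MeasurableSet {s : ℝ | 0 ≤ η s} := measurableSet_le measurable_const hηm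
        have he : {s : ℝ | 0 ≤ a s ↔ 0 ≤ η s} =
            ({s : ℝ | 0 ≤ a s} ∩ {s : ℝ | 0 ≤ η s}) ∪
            ({s : ℝ | 0 ≤ a s}ᶜ ∩ {s : ℝ | 0 ≤ η s}ᶜ) := by
          ext x
          simp only [Set.mem_setOf_eq, Set.mem_union, Set.mem_inter_iff, Set.mem_compl_iff]
          tauto
        rw [he]
        exact (h1.inter h2).union (h1.compl.inter h2.compl)
      exact Measurable.ite hS measurable_const measurable_const
    · intro s
      by_cases h : (0 ≤ a s ↔ 0 ≤ η s) <;> simp [h, Set.mem_Icc, hss, le_refl]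
    · refine intervalIntegral.integral_congr fun s _ => ?_
      show a s * (η s * (if (0 ≤ a s ↔ 0 ≤ η s) then sbar ^ 2 else slow ^ 2) - 2 * G (η s)) = C (a s)
      rw [hG, hC]
      rcases (abs_eq hc).mp (hηc s) with h | h <;> rw [h]
      · -- η s = c
        by_cases h1 : 0 ≤ a s
        · rw [if_pos (iff_of_true h1 hc), max_eq_left hc, max_eq_right (neg_nonpos.mpr hc),
            max_eq_right (neg_nonpos.mpr h1)]
          ring
        · rw [if_neg (fun hiff => h1 (hiff.mpr hc)), max_eq_left hc,
            max_eq_right (neg_nonpos.mpr hc), max_eq_left (by linarith [not_le.mp h1])]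
          ring
      · -- η s = -c
        rw [neg_neg]
        by_cases hc0 : c = 0
        · subst hc0
          simp [hMdef]
        · have hcp : 0 < c := lt_of_le_of_ne hc (Ne.symm hc0)
          by_cases h1 : 0 ≤ a s
          · rw [if_neg (fun hiff => by linarith [hiff.mp h1]),
              max_eq_right (neg_nonpos.mpr hc), max_eq_left hc,
              max_eq_right (neg_nonpos.mpr h1)]
            ring
          · rw [if_pos (iff_of_false h1 (by linarith)),
              max_eq_right (neg_nonpos.mpr hc), max_eq_left hc,
              max_eq_left (by linarith [not_le.mp h1])]
            ring
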